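/- If a global solution u of the Stokes system with 1-periodic elliptic coefficients has the form u = H + (P_j^β + χ_j^β)E_j^β, and this function vanishes identically on ℝ^d, then E = 0 and H = 0. Consequently the representation of u by (H, E) is unique. -/

import Mathlib

open MeasureTheory Metric Bornology

noncomputable section

abbrev Rd (d : ℕ) := EuclideanSpace ℝ (Fin d)

/-- Partial derivative `∂f/∂x_j` at `x`. -/
noncomputable def pd {d : ℕ} (f : Rd d → ℝ) (j : Fin d) (x : Rd d) : ℝ :=
  fderiv ℝ f x (EuclideanSpace.single j 1)

/-- `|∇u|²` for a vector field `u`. -/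
noncomputable def gradNormSq {d : ℕ} (u : Rd d → Rd d) (x : Rd d) : ℝ :=
  ∑ j, ∑ β, (pd (fun y => u y β) j x) ^ 2

/-- divergence of a vector field -/
noncomputable def divg {d : ℕ} (u : Rd d → Rd d) (x : Rd d) : ℝ :=
  ∑ j, pd (fun y => u y j) j x

/-- Coefficient tensor `A y i j α β ~ a_{ij}^{αβ}(y)`. -/
abbrev Coeff (d : ℕ) := Rd d → Fin d → Fin d → Fin d → Fin d → ℝ

/-- Ellipticity: `μ|ξ|² ≤ a_{ij}^{αβ} ξ_i^α ξ_j^β ≤ μ⁻¹ |ξ|²`. -/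
def IsElliptic {d : ℕ} (μ : ℝ) (A : Coeff d) : Prop :=
  ∀ y (ξ : Fin d → Fin d → ℝ),
    μ * (∑ i, ∑ α, (ξ i α) ^ 2) ≤ (∑ i, ∑ j, ∑ α, ∑ β, A y i j α β * (ξ i α) * (ξ j β)) ∧
    (∑ i, ∑ j, ∑ α, ∑ β, A y i j α β * (ξ i α) * (ξ j β)) ≤ μ⁻¹ * (∑ i, ∑ α, (ξ i α) ^ 2)

def intVec {d : ℕ} (z : Fin d → ℤ) : Rd d := WithLp.toLp 2 (fun i => (z i : ℝ))

/-- 1-periodicity of a function on `ℝ^d`. -/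
def IsPeriodicFun {d : ℕ} {E : Type*} (w : Rd d → E) : Prop :=
  ∀ y (z : Fin d → ℤ), w (y + intVec z) = w y

/-- The unit cell `Y = [0,1)^d`. -/
def Ycell (d : ℕ) : Set (Rd d) := {y | ∀ i, y i ∈ Set.Ico (0 : ℝ) 1}

/-- The bilinear form `a_per(ψ,φ) = ∫_Y a_{ij}^{αβ} ∂_j ψ^β ∂_i φ^α`. -/
noncomputable def aper {d : ℕ} (A : Coeff d) (ψ φ : Rd d → Rd d) : ℝ :=
  ∫ y in Ycell d, ∑ i, ∑ j, ∑ α, ∑ β,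
    A y i j α β * pd (fun z => ψ z β) j y * pd (fun z => φ z α) i y

/-- `P_j^β(y) = y_j e^β`. -/
def Pfun {d : ℕ} (j β : Fin d) : Rd d → Rd d := fun y => EuclideanSpace.single β (y j)

/-- Membership in `V_per(Y)`: periodic, divergence free, mean zero. -/
def MemVper {d : ℕ} (u : Rd d → Rd d) : Prop :=
  ContDiff ℝ 1 u ∧ IsPeriodicFun u ∧ (∀ x, divg u x = 0) ∧ (∫ y in Ycell d, u y) = 0

/-- `χ` is the family of correctors for the Stokes system with coefficients `A`. -/
def IsCorrector {d : ℕ} (A : Coeff d) (χ : Fin d → Fin d → Rd d → Rd d) : Prop :=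
  ∀ j β, MemVper (χ j β) ∧
    ∀ φ, MemVper φ → aper A (χ j β) φ = - aper A (Pfun j β) φ

/-- The homogenized coefficients `â_{ij}^{αβ}`. -/
noncomputable def Ahat {d : ℕ} (A : Coeff d) (χ : Fin d → Fin d → Rd d → Rd d)
    (i j α β : Fin d) : ℝ :=
  aper A (fun y => χ j β y + Pfun j β y) (fun y => χ i α y + Pfun i α y)

/-- Weak solution of `-div(Acoef ∇u) + ∇p = F + div f`, `div u = g` in `Ω`. -/
def IsStokesWeakSol {d : ℕ} (Acoef : Coeff d) (Ω : Set (Rd d))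
    (u : Rd d → Rd d) (p : Rd d → ℝ) (F : Rd d → Rd d)
    (f : Rd d → Fin d → Fin d → ℝ) (g : Rd d → ℝ) : Prop :=
  (∀ x ∈ Ω, divg u x = g x) ∧
  ∀ φ : Rd d → Rd d, ContDiff ℝ 1 φ → HasCompactSupport φ → tsupport φ ⊆ Ω →
    (∫ x in Ω, ∑ i, ∑ j, ∑ α, ∑ β,
        Acoef x i j α β * pd (fun y => u y β) j x * pd (fun y => φ y α) i x)
      - (∫ x in Ω, p x * divg φ x)
      = (∫ x in Ω, ∑ α, F x α * φ x α)
        - (∫ x in Ω, ∑ i, ∑ α, f x i α * pd (fun y => φ y α) i x)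

/-! Shifting by a lattice vector `z` leaves the periodic correctors unchanged, while the
affine part `P_j^β E_j^β` moves by `∑ z_j E_j^β e^β`; comparing `u(z)` with `u(0)` forces
`E = 0`, and then `u ≡ H`. -/

lemma sum_smul_Pfun_apply {d : ℕ} (E : Fin d → Fin d → ℝ) (x : Rd d) (β : Fin d) :
    (∑ j, ∑ β', E j β' • Pfun j β' x) β = ∑ j, E j β * x j := by
  simp [Pfun, Pi.single_apply]

lemma sum_smul_Pfun_intVec_eq_zero {d : ℕ} {χ : Fin d → Fin d → Rd d → Rd d}
    (hper : ∀ j β, IsPeriodicFun (χ j β)) {H : Rd d} {E : Fin d → Fin d → ℝ}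
    (hzero : ∀ x : Rd d, H + ∑ j, ∑ β, E j β • (Pfun j β x + χ j β x) = 0)
    (z : Fin d → ℤ) :
    ∑ j, ∑ β, E j β • Pfun j β (intVec z) = 0 := by
  have hχ : ∀ j β, χ j β (intVec z) = χ j β 0 := fun j β => by
    simpa using hper j β 0 z
  have hP : ∀ j β, Pfun j β (0 : Rd d) = 0 := fun j β => by simp [Pfun]
  have h₀ := hzero 0
  have hz := hzero (intVec z)
  simp only [hP, hχ, zero_add, smul_add, Finset.sum_add_distrib] at h₀ hz
  rw [← add_assoc, add_comm H, add_assoc, h₀, add_zero] at hz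
  exact hz

theorem representation_unique_general {d : ℕ} (χ : Fin d → Fin d → Rd d → Rd d)
    (hper : ∀ j β, IsPeriodicFun (χ j β))
    (H : Rd d) (E : Fin d → Fin d → ℝ)
    (hzero : ∀ x : Rd d,
      H + ∑ j, ∑ β, E j β • (Pfun j β x + χ j β x) = 0) :
    E = 0 ∧ H = 0 := by
  have hE : E = 0 := by
    funext k β
    have h := congrArg (· β) (sum_smul_Pfun_intVec_eq_zero hper hzero (Pi.single k 1))
    simpa [sum_smul_Pfun_apply, intVec, Pi.single_apply] using h
  refine ⟨hE, ?_⟩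
  simpa [hE] using hzero 0

/-- uniqueness of the representation `u = H + (P_j^β + χ_j^β)E_j^β`:
if this function vanishes identically then `E = 0` and `H = 0`. -/
theorem representation_unique {d : ℕ} (χ : Fin d → Fin d → Rd d → Rd d)
    (hsm : ∀ j β, ContDiff ℝ 1 (χ j β))
    (hper : ∀ j β, IsPeriodicFun (χ j β))
    (hmeangrad : ∀ (j β i α : Fin d),
      (∫ y in Ycell d, pd (fun z => χ j β z α) i y) = 0)
    (H : Rd d) (E : Fin d → Fin d → ℝ)
    (hzero : ∀ x : Rd d,
      H + ∑ j, ∑ β, E j β • (Pfun j β x + χ j β x) = 0) :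
    E = 0 ∧ H = 0 :=
  representation_unique_general χ hper H E hzero

end
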